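/- arXiv:2510.18164 — 3 statements merged into one kernel-verified Lean document; each statement's English description precedes it below -/
import Mathlib

section
/- Let f be a weighted Boolean CSP instance on n ≥ 1 variables with m ≥ 1 constraints and weighted length ℓ > 0. Let ε ∈ (0,1] and let δ be a real number with δ ≥ 1 + εw/ℓ. Set S_δ = {j ∈ {1,…,n} : ℓ_j ≤ δℓ/n} and r = ⌊n·εw/(δℓ)⌋. Then r ≤ |S_δ|, and the number of assignments z ∈ {0,1}^n with W(f,z) ≥ w* − εw is at least Σ_{i=0}^{r} C(|S_δ|, i), and in particular at least C(|S_δ|, r). -/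
/-- A weighted Boolean constraint satisfaction (MAX-CSP) instance on `n` variables:
`m` constraints, where constraint `i` is specified by a finite set `vars i` of variables,
a predicate `sat i` on assignments whose truth value depends only on the restriction of the
assignment to `vars i`, and a positive real weight `wt i`. -/
structure CSP (n : ℕ) where
  m : ℕ
  vars : Fin m → Finset (Fin n)
  sat : Fin m → (Fin n → Bool) → Bool
  wt : Fin m → ℝ
  wt_pos : ∀ i, 0 < wt i
  sat_local : ∀ i z z', (∀ j ∈ vars i, z j = z' j) → sat i z = sat i z'

namespace CSP

variable {n : ℕ}

/-- The total weight `w = Σᵢ wᵢ`. -/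
noncomputable def totalWeight (f : CSP n) : ℝ := ∑ i, f.wt i

/-- The weighted length `ℓ = Σᵢ |Sᵢ| wᵢ`. -/
noncomputable def wlen (f : CSP n) : ℝ := ∑ i, ((f.vars i).card : ℝ) * f.wt i

/-- The contribution `ℓⱼ` of variable `j`: the sum of the weights of all constraints
containing it. -/
noncomputable def contrib (f : CSP n) (j : Fin n) : ℝ :=
  ∑ i, if j ∈ f.vars i then f.wt i else 0

/-- The weight `W(f,z)` of an assignment `z`: the sum of the weights of the constraints
satisfied by `z`. -/
noncomputable def W (f : CSP n) (z : Fin n → Bool) : ℝ :=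
  ∑ i, if f.sat i z then f.wt i else 0

/-- The optimal weight `w* = max_z W(f,z)`. -/
noncomputable def wstar (f : CSP n) : ℝ :=
  Finset.univ.sup' Finset.univ_nonempty f.W

end CSP

/-!
Let `z₀` be an optimal assignment. Flipping `z₀` on a set `T` of variables only affects the
constraints meeting `T`, so it loses at most `Σ_{j ∈ T} ℓ_j`. Every `j ∈ S_δ` has
`ℓ_j ≤ δℓ/n`, so flipping any `T ⊆ S_δ` with `|T| ≤ r` loses at most `rδℓ/n ≤ εw`; distinct
`T` give distinct assignments. Since `Σ_j ℓ_j = ℓ`, Markov's inequality bounds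
`(n - |S_δ|) · δℓ/n ≤ ℓ`, which together with `δℓ ≥ ℓ + εw` gives `r ≤ |S_δ|`.
-/

namespace Finset

variable {ι β : Type*} [DecidableEq ι]

theorem piecewise_left_injective {g : ι → β} (z : ι → β) (hgz : ∀ i, g i ≠ z i) :
    Function.Injective fun T : Finset ι => T.piecewise g z := by
  intro T T' h
  ext i
  have hi := congrFun h i
  by_cases hT : i ∈ T <;> by_cases hT' : i ∈ T' <;>
    simp only [hT, hT', piecewise_eq_of_mem, piecewise_eq_of_notMem, not_false_eq_true] at hi ⊢
  exacts [(hgz i hi).elim, (hgz i hi.symm).elim]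

theorem card_biUnion_powersetCard (S : Finset ι) (r : ℕ) :
    ((range (r + 1)).biUnion (S.powersetCard ·)).card = ∑ i ∈ range (r + 1), S.card.choose i := by
  rw [card_biUnion fun _ _ _ _ hij => S.pairwise_disjoint_powersetCard hij]
  simp only [card_powersetCard]

end Finset

namespace CSP

variable {n : ℕ} (f : CSP n)

theorem totalWeight_nonneg : 0 ≤ f.totalWeight :=
  Finset.sum_nonneg fun i _ => (f.wt_pos i).le

theorem contrib_nonneg (j : Fin n) : 0 ≤ f.contrib j :=
  Finset.sum_nonneg fun i _ => by split <;> simp [(f.wt_pos i).le]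

theorem sum_contrib (T : Finset (Fin n)) :
    ∑ j ∈ T, f.contrib j = ∑ i, ((T ∩ f.vars i).card : ℝ) * f.wt i := by
  simp only [contrib]
  rw [Finset.sum_comm]
  refine Finset.sum_congr rfl fun i _ => ?_
  rw [Finset.sum_ite_mem, Finset.sum_const, nsmul_eq_mul]

theorem sum_contrib_univ : ∑ j, f.contrib j = f.wlen := by
  simp only [sum_contrib, Finset.univ_inter, wlen]

theorem W_sub_W_le_sum_contrib {z z' : Fin n → Bool} {T : Finset (Fin n)}
    (h : ∀ j ∉ T, z j = z' j) : f.W z - f.W z' ≤ ∑ j ∈ T, f.contrib j := by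
  rw [sum_contrib, W, W, ← Finset.sum_sub_distrib]
  refine Finset.sum_le_sum fun i _ => ?_
  have hw := (f.wt_pos i).le
  by_cases hT : Disjoint T (f.vars i)
  · have : f.sat i z = f.sat i z' :=
      f.sat_local i z z' fun j hj => h j (Finset.disjoint_right.mp hT hj)
    rw [this, sub_self]
    positivity
  · have : (1 : ℝ) ≤ (T ∩ f.vars i).card := by
      exact_mod_cast Finset.Nonempty.card_pos (Finset.not_disjoint_iff_nonempty_inter.mp hT)
    split <;> split <;> nlinarith

theorem exists_W_eq_wstar : ∃ z, f.W z = f.wstar := by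
  obtain ⟨z, -, hz⟩ := Finset.exists_mem_eq_sup' Finset.univ_nonempty f.W
  exact ⟨z, hz.symm⟩

theorem sub_card_filter_contrib_le_mul_le_wlen (t : ℝ) :
    ((n : ℝ) - (Finset.univ.filter fun j => f.contrib j ≤ t).card) * t ≤ f.wlen := by
  have hcard := Finset.card_filter_add_card_filter_not (s := Finset.univ) fun j => f.contrib j ≤ t
  rw [Finset.card_univ, Fintype.card_fin] at hcard
  have hn : (n : ℝ) = _ := congrArg Nat.cast hcard.symm
  rw [hn, Nat.cast_add, add_sub_cancel_left, ← nsmul_eq_mul, ← sum_contrib_univ]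
  calc _ ≤ ∑ j ∈ Finset.univ.filter fun j => ¬f.contrib j ≤ t, f.contrib j :=
        Finset.card_nsmul_le_sum _ _ _ fun j hj => (not_le.mp (Finset.mem_filter.mp hj).2).le
    _ ≤ ∑ j, f.contrib j :=
        Finset.sum_le_sum_of_subset_of_nonneg (Finset.subset_univ _)
          fun j _ _ => f.contrib_nonneg j

theorem sum_choose_le_card_near_optimal (S : Finset (Fin n)) (r : ℕ) {c : ℝ}
    (hS : ∀ T ⊆ S, T.card ≤ r → ∑ j ∈ T, f.contrib j ≤ c) :
    ∑ i ∈ Finset.range (r + 1), S.card.choose i ≤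
      Nat.card {z : Fin n → Bool // f.wstar - c ≤ f.W z} := by
  classical
  obtain ⟨z₀, hz₀⟩ := f.exists_W_eq_wstar
  set flipOn := fun T : Finset (Fin n) => T.piecewise (fun j => !z₀ j) z₀
  set F := (Finset.range (r + 1)).biUnion (S.powersetCard ·)
  have hflipOn : ∀ T ∈ F, f.wstar - c ≤ f.W (flipOn T) := by
    intro T hT
    simp only [F, Finset.mem_biUnion, Finset.mem_range, Finset.mem_powersetCard] at hT
    obtain ⟨i, hi, hTS, rfl⟩ := hT
    have := f.W_sub_W_le_sum_contrib (z := z₀) (z' := flipOn T) (T := T)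
      fun j hj => (Finset.piecewise_eq_of_notMem _ _ _ hj).symm
    linarith [hS T hTS (by omega)]
  rw [← Finset.card_biUnion_powersetCard, Nat.card_eq_fintype_card, Fintype.card_subtype,
    ← Finset.card_image_of_injective F
      (Finset.piecewise_left_injective z₀ fun j => Bool.not_ne_self (z₀ j))]
  exact Finset.card_le_card fun z hz => by
    obtain ⟨T, hT, rfl⟩ := Finset.mem_image.mp hz
    exact Finset.mem_filter.mpr ⟨Finset.mem_univ _, hflipOn T hT⟩

end CSP

theorem CSP.many_near_optimal_assignments_general (n : ℕ) (hn : 1 ≤ n) (f : CSP n)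
    (hl : 0 < f.wlen) (ε : ℝ) (hε0 : 0 < ε)
    (δ : ℝ) (hδ : 1 + ε * f.totalWeight / f.wlen ≤ δ)
    (Sδ : Finset (Fin n))
    (hSδ : Sδ = Finset.univ.filter (fun j : Fin n => f.contrib j ≤ δ * f.wlen / (n : ℝ)))
    (r : ℕ) (hr : r = ⌊(n : ℝ) * ε * f.totalWeight / (δ * f.wlen)⌋₊) :
    r ≤ Sδ.card ∧
    (∑ i ∈ Finset.range (r + 1), Sδ.card.choose i) ≤
      Nat.card {z : Fin n → Bool // f.wstar - ε * f.totalWeight ≤ f.W z} ∧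
    Sδ.card.choose r ≤
      Nat.card {z : Fin n → Bool // f.wstar - ε * f.totalWeight ≤ f.W z} := by
  have hw := f.totalWeight_nonneg
  have hn0 : (0 : ℝ) < n := by exact_mod_cast hn
  have hδℓ : f.wlen + ε * f.totalWeight ≤ δ * f.wlen := by
    have := mul_le_mul_of_nonneg_right hδ hl.le
    rwa [add_mul, one_mul, div_mul_cancel₀ _ hl.ne'] at this
  have hδℓ0 : 0 < δ * f.wlen := by nlinarith [mul_nonneg hε0.le hw]
  set x := (n : ℝ) * ε * f.totalWeight / (δ * f.wlen)
  have hx0 : 0 ≤ x := by positivity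
  have hxS : x ≤ Sδ.card := by
    have hmarkov := f.sub_card_filter_contrib_le_mul_le_wlen (δ * f.wlen / n)
    rw [← hSδ, mul_div_assoc', div_le_iff₀ hn0] at hmarkov
    rw [div_le_iff₀ hδℓ0]
    nlinarith [mul_le_mul_of_nonneg_left hδℓ hn0.le]
  have hsmall : ∀ T ⊆ Sδ, T.card ≤ r → ∑ j ∈ T, f.contrib j ≤ ε * f.totalWeight := by
    intro T hTS hTr
    have hr' : (T.card : ℝ) ≤ x := (Nat.cast_le.mpr hTr).trans (hr ▸ Nat.floor_le hx0)
    calc ∑ j ∈ T, f.contrib j ≤ T.card • (δ * f.wlen / n) :=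
          Finset.sum_le_card_nsmul _ _ _ fun j hj => by
            simpa [hSδ] using hTS hj
      _ ≤ x * (δ * f.wlen / n) := by rw [nsmul_eq_mul]; gcongr
      _ = ε * f.totalWeight := by simp only [x]; field_simp [left_ne_zero_of_mul hδℓ0.ne']
  have hsum := f.sum_choose_le_card_near_optimal Sδ r hsmall
  exact ⟨hr ▸ Nat.floor_le_of_le hxS, hsum,
    (Finset.single_le_sum (fun i _ => Nat.zero_le _) (Finset.self_mem_range_succ r)).trans hsum⟩

theorem CSP.many_near_optimal_assignments (n : ℕ) (hn : 1 ≤ n) (f : CSP n) (hm : 1 ≤ f.m)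
    (hl : 0 < f.wlen) (ε : ℝ) (hε0 : 0 < ε) (hε1 : ε ≤ 1)
    (δ : ℝ) (hδ : 1 + ε * f.totalWeight / f.wlen ≤ δ)
    (Sδ : Finset (Fin n))
    (hSδ : Sδ = Finset.univ.filter (fun j : Fin n => f.contrib j ≤ δ * f.wlen / (n : ℝ)))
    (r : ℕ) (hr : r = ⌊(n : ℝ) * ε * f.totalWeight / (δ * f.wlen)⌋₊) :
    r ≤ Sδ.card ∧
    (∑ i ∈ Finset.range (r + 1), Sδ.card.choose i) ≤
      Nat.card {z : Fin n → Bool // f.wstar - ε * f.totalWeight ≤ f.W z} ∧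
    Sδ.card.choose r ≤
      Nat.card {z : Fin n → Bool // f.wstar - ε * f.totalWeight ≤ f.W z} :=
  CSP.many_near_optimal_assignments_general n hn f hl ε hε0 δ hδ Sδ hSδ r hr
end

section
/- Let f be an E-k-SAT formula on n ≥ 1 variables with m ≥ 1 clauses, where k ≥ 1 and each clause is a disjunction of exactly k literals over k distinct variables. Let ε ∈ (0,1] and let δ be a real number with δ ≥ 1 + ε(2^k − 1)/(2^k·k) (so δ > 1). Set r = ⌊n·ε(2^k − 1)/(δ·2^k·k)⌋. Then the number of assignments z ∈ {0,1}^n with C(f,z) ≥ (1−ε)·m* is at least 2^{H(rδ/((δ−1)n)) · ((δ−1)/δ)·n} / (n+1). -/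
/-- An E-k-SAT formula on `n` Boolean variables: `m` clauses, each clause `i` being a
disjunction of exactly `k` literals over `k` distinct variables. The `t`-th literal of clause
`i` is the variable `vars i t` if `sign i t = true`, and its negation otherwise. -/
structure EkSAT (n k : ℕ) where
  m : ℕ
  vars : Fin m → Fin k → Fin n
  vars_inj : ∀ i, Function.Injective (vars i)
  sign : Fin m → Fin k → Bool

namespace EkSAT

variable {n k : ℕ}

/-- The number `C(f,z)` of clauses of `f` satisfied by the assignment `z`: clause `i` is
satisfied iff some literal of it evaluates to true. -/
def count (f : EkSAT n k) (z : Fin n → Bool) : ℕ :=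
  (Finset.univ.filter (fun i : Fin f.m => ∃ t : Fin k, z (f.vars i t) = f.sign i t)).card

/-- The maximum number `m* = max_z C(f,z)` of simultaneously satisfiable clauses. -/
def mstar (f : EkSAT n k) : ℕ :=
  Finset.univ.sup f.count

end EkSAT

/-- The binary entropy function `H(p) = -p log₂ p - (1-p) log₂ (1-p)`,
with the convention `0 log₂ 0 = 0` (enforced by `Real.logb 2 0 = 0`). -/
noncomputable def binH (p : ℝ) : ℝ := -p * Real.logb 2 p - (1 - p) * Real.logb 2 (1 - p)

/-! Fix an optimal assignment `z` and, in every clause it satisfies, one true literal, its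
witness. Flipping a set `S` of variables can only falsify clauses witnessed inside `S`, so it
loses at most `∑ v ∈ S, load v` clauses, where `load v` counts the clauses witnessed by `v`; the
loads sum to `m*`. By Markov's inequality at most `b ≤ r / ε ≤ n / δ` variables have load above
`ε m* / r`, and flipping any `r` of the others keeps `(1 - ε) m*` clauses satisfied, so at least
`C(n - b, r)` assignments are near-optimal. Finally `C(N, r) ≥ 2 ^ (N H(r / N)) / (N + 1)`, as the
mode `r` of the binomial distribution `B(N, r / N)` carries mass at least `1 / (N + 1)`, and
`x ↦ x H(r / x)` is nondecreasing (by convexity of `t log t`); take `x = n (δ - 1) / δ ≤ n - b`. -/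

open Real Finset

theorem Nat.choose_succ_mul_pow_mul_pow_mul (N p q i : ℕ) :
    N.choose (i + 1) * p ^ (i + 1) * q ^ (N - (i + 1)) * ((i + 1) * q) =
      N.choose i * p ^ i * q ^ (N - i) * ((N - i) * p) := by
  rcases lt_or_ge i N with hi | hi
  · obtain ⟨j, hj⟩ : ∃ j, N - i = j + 1 := ⟨N - (i + 1), by omega⟩
    rw [hj, show N - (i + 1) = j by omega, ← hj]
    have key := Nat.choose_succ_right_eq N i
    calc _ = N.choose (i + 1) * (i + 1) * p ^ (i + 1) * q ^ (j + 1) := by ring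
      _ = _ := by rw [key, hj]; ring
  · simp [Nat.choose_eq_zero_of_lt (show N < i + 1 by omega), Nat.sub_eq_zero_of_le hi]

theorem Nat.choose_mul_pow_mul_pow_le {N r : ℕ} (hr : r ≤ N) (i : ℕ) :
    N.choose i * r ^ i * (N - r) ^ (N - i) ≤ N.choose r * r ^ r * (N - r) ^ (N - r) := by
  set t : ℕ → ℕ := fun i => N.choose i * r ^ i * (N - r) ^ (N - i)
  have step := fun a => Nat.choose_succ_mul_pow_mul_pow_mul N r (N - r) a
  have up : MonotoneOn t (Set.Iic r) := by
    refine monotoneOn_of_le_succ Set.ordConnected_Iic fun a _ _ ha => ?_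
    rw [Order.succ_eq_add_one, Set.mem_Iic] at ha
    have hpos : 0 < (N - a) * r := Nat.mul_pos (by omega) (by omega)
    refine Nat.le_of_mul_le_mul_right ?_ hpos
    calc t a * ((N - a) * r) = t (a + 1) * ((a + 1) * (N - r)) := (step a).symm
      _ ≤ t (a + 1) * ((N - a) * r) := by
        refine Nat.mul_le_mul_left _ ?_
        rw [mul_comm (N - a)]
        exact Nat.mul_le_mul (by omega) (by omega)
  have down : AntitoneOn t (Set.Ici r) := by
    refine antitoneOn_of_succ_le Set.ordConnected_Ici fun a _ ha _ => ?_
    rw [Order.succ_eq_add_one]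
    rw [Set.mem_Ici] at ha
    rcases hr.eq_or_lt with rfl | hrN
    · simp [t, Nat.choose_eq_zero_of_lt (show r < a + 1 by omega)]
    have hpos : 0 < (a + 1) * (N - r) := Nat.mul_pos (by omega) (by omega)
    refine Nat.le_of_mul_le_mul_right ?_ hpos
    calc t (a + 1) * ((a + 1) * (N - r)) = t a * ((N - a) * r) := step a
      _ ≤ t a * ((a + 1) * (N - r)) := by
        refine Nat.mul_le_mul_left _ ?_
        rw [mul_comm (a + 1)]
        exact Nat.mul_le_mul (by omega) (by omega)
  rcases le_total i r with hi | hi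
  · exact up hi (Set.mem_Iic.2 le_rfl) hi
  · exact down (Set.mem_Ici.2 le_rfl) hi hi

theorem Nat.pow_le_succ_mul_choose_mul_pow_mul_pow {N r : ℕ} (hr : r ≤ N) :
    N ^ N ≤ (N + 1) * (N.choose r * r ^ r * (N - r) ^ (N - r)) := by
  calc N ^ N = (r + (N - r)) ^ N := by rw [Nat.add_sub_cancel' hr]
    _ = ∑ i ∈ range (N + 1), r ^ i * (N - r) ^ (N - i) * N.choose i := add_pow _ _ _
    _ ≤ ∑ _i ∈ range (N + 1), N.choose r * r ^ r * (N - r) ^ (N - r) :=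
      sum_le_sum fun i _ => by
        rw [mul_comm, ← mul_assoc]; exact Nat.choose_mul_pow_mul_pow_le hr i
    _ = _ := by rw [sum_const, card_range, smul_eq_mul]

theorem ConvexOn.map_add_sub_map_le {f : ℝ → ℝ} {s : Set ℝ} (hf : ConvexOn ℝ s f)
    {a b h : ℝ} (ha : a ∈ s) (hbh : b + h ∈ s) (hab : a ≤ b) (hh : 0 ≤ h) :
    f (a + h) - f a ≤ f (b + h) - f b := by
  rcases hh.eq_or_lt with rfl | hh
  · simp
  have hs := hf.1.ordConnected
  have hah : a + h ∈ s := hs.out ha hbh ⟨by linarith, by linarith⟩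
  have hb : b ∈ s := hs.out ha hbh ⟨hab, by linarith⟩
  have hslope : (f (a + h) - f a) / h ≤ (f (b + h) - f b) / h := by
    calc (f (a + h) - f a) / h = (f (a + h) - f a) / (a + h - a) := by ring_nf
      _ ≤ (f (b + h) - f a) / (b + h - a) :=
        hf.secant_mono ha hah hbh (by linarith) (by linarith) (by linarith)
      _ = (f a - f (b + h)) / (a - (b + h)) := by rw [← neg_div_neg_eq, neg_sub, neg_sub]
      _ ≤ (f b - f (b + h)) / (b - (b + h)) :=
        hf.secant_mono hbh ha hb (by linarith) (by linarith) hab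
      _ = (f (b + h) - f b) / h := by rw [← neg_div_neg_eq, neg_sub, neg_sub, add_sub_cancel_left]
  exact (div_le_div_iff_of_pos_right hh).1 hslope

theorem binH_mul_log_two (p : ℝ) : binH p * log 2 = binEntropy p := by
  rw [binEntropy_eq_negMulLog_add_negMulLog_one_sub]
  simp only [binH, logb, negMulLog]
  field_simp
  ring

theorem mul_binEntropy_div {r x : ℝ} (hx : x ≠ 0) :
    x * binEntropy (r / x) = negMulLog r + negMulLog (x - r) - negMulLog x := by
  have h₁ := negMulLog_mul (r / x) x
  have h₂ := negMulLog_mul ((x - r) / x) x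
  rw [div_mul_cancel₀ _ hx] at h₁ h₂
  rw [binEntropy_eq_negMulLog_add_negMulLog_one_sub, one_sub_div hx]
  have hxx : x * x⁻¹ = 1 := mul_inv_cancel₀ hx
  linear_combination -h₁ - h₂ - negMulLog x * hxx

theorem monotoneOn_mul_binEntropy_div {r : ℝ} (hr : 0 ≤ r) :
    MonotoneOn (fun x => x * binEntropy (r / x)) (Set.Ici r) := by
  intro x hx y hy hxy
  rcases hr.eq_or_lt with rfl | hr
  · simp
  have hx0 : x ≠ 0 := (hr.trans_le hx).ne'
  have hy0 : y ≠ 0 := (hr.trans_le hy).ne'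
  simp only [mul_binEntropy_div hx0, mul_binEntropy_div hy0, negMulLog]
  have := convexOn_mul_log.map_add_sub_map_le (a := x - r) (b := y - r) (h := r)
    (Set.mem_Ici.2 (by linarith [Set.mem_Ici.1 hx]))
    (Set.mem_Ici.2 (by linarith [Set.mem_Ici.1 hy])) (by linarith) hr.le
  simp only [sub_add_cancel] at this
  linarith

theorem mul_binEntropy_div_le_log_choose {N r : ℕ} (hr : r ≤ N) :
    N * binEntropy (r / N) ≤ log ((N + 1) * N.choose r) := by
  rcases N.eq_zero_or_pos with rfl | hN
  · obtain rfl : r = 0 := by omega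
    simp
  obtain ⟨s, rfl⟩ := Nat.exists_eq_add_of_le hr
  have hchoose : (0 : ℝ) < (r + s).choose r := by exact_mod_cast Nat.choose_pos hr
  have hbound :
      ((r + s : ℕ) : ℝ) ^ (r + s) ≤ ((r + s + 1) * (r + s).choose r) * (r ^ r * s ^ s) := by
    exact_mod_cast (Nat.pow_le_succ_mul_choose_mul_pow_mul_pow hr).trans_eq (by simp; ring)
  have hrr : (0 : ℝ) < r ^ r := by exact_mod_cast Nat.pow_self_pos
  have hss : (0 : ℝ) < s ^ s := by exact_mod_cast Nat.pow_self_pos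
  have hlog := log_le_log (by positivity) hbound
  rw [log_mul (by positivity : ((r + s + 1 : ℝ) * (r + s).choose r) ≠ 0) (by positivity),
    log_mul hrr.ne' hss.ne', log_pow, log_pow, log_pow] at hlog
  rw [mul_binEntropy_div (by positivity)]
  push_cast at hlog ⊢
  simp only [negMulLog, add_sub_cancel_left]
  linarith

theorem two_rpow_mul_binH_div_le {r N : ℕ} {x : ℝ} (hrx : r ≤ x) (hxN : x ≤ N) :
    (2 : ℝ) ^ (x * binH (r / x)) ≤ (N + 1) * N.choose r := by
  have hrN : r ≤ N := by exact_mod_cast hrx.trans hxN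
  have hchoose : (0 : ℝ) < N.choose r := by exact_mod_cast Nat.choose_pos hrN
  calc (2 : ℝ) ^ (x * binH (r / x)) = exp (x * binEntropy (r / x)) := by
        rw [rpow_def_of_pos two_pos, ← binH_mul_log_two]; ring_nf
    _ ≤ exp (N * binEntropy (r / N)) :=
        exp_le_exp.2 (monotoneOn_mul_binEntropy_div r.cast_nonneg hrx (hrx.trans hxN) hxN)
    _ ≤ exp (log ((N + 1) * N.choose r)) := exp_le_exp.2 (mul_binEntropy_div_le_log_choose hrN)
    _ = (N + 1) * N.choose r := exp_log (by positivity)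

theorem Finset.card_filter_mul_sum_lt_mul_le_one {ι : Type*} (s : Finset ι) {d : ι → ℝ}
    (hd : ∀ i ∈ s, 0 ≤ d i) (t : ℝ) :
    (#{i ∈ s | t * ∑ j ∈ s, d j < d i} : ℝ) * t ≤ 1 := by
  rcases (sum_nonneg hd).eq_or_lt with hD | hD
  · have hempty : {i ∈ s | t * ∑ j ∈ s, d j < d i} = ∅ :=
      filter_false_of_mem fun i hi => by
        rw [← hD, mul_zero, not_lt, hD]; exact single_le_sum hd hi
    simp [hempty]
  set D := ∑ j ∈ s, d j
  have markov : (#{i ∈ s | t * D < d i} : ℝ) * (t * D) ≤ D :=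
    calc (#{i ∈ s | t * D < d i} : ℝ) * (t * D) ≤ ∑ i ∈ s with t * D < d i, d i := by
          rw [← nsmul_eq_mul]; exact card_nsmul_le_sum _ _ _ fun i hi => (mem_filter.1 hi).2.le
      _ ≤ D := sum_le_sum_of_subset_of_nonneg (filter_subset _ _) fun i hi _ => hd i hi
  exact le_of_mul_le_mul_right (by rwa [one_mul, mul_assoc]) hD

namespace EkSAT

variable {n k : ℕ} (f : EkSAT n k)

def satisfied (z : Fin n → Bool) : Finset (Fin f.m) := {i | ∃ t, z (f.vars i t) = f.sign i t}

theorem card_satisfied (z : Fin n → Bool) : #(f.satisfied z) = f.count z := rfl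

theorem exists_count_eq_mstar : ∃ z, f.count z = f.mstar := by
  obtain ⟨z, -, hz⟩ := exists_mem_eq_sup univ univ_nonempty f.count
  exact ⟨z, hz.symm⟩

noncomputable def witness (z : Fin n → Bool) (i : f.satisfied z) : Fin n :=
  f.vars i (mem_filter.1 i.2).2.choose

theorem mem_satisfied_of_apply_witness {z z' : Fin n → Bool} (i : f.satisfied z)
    (h : z' (f.witness z i) = z (f.witness z i)) : (i : Fin f.m) ∈ f.satisfied z' :=
  mem_filter.2 ⟨mem_univ _, _, h.trans (mem_filter.1 i.2).2.choose_spec⟩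

noncomputable def load (z : Fin n → Bool) (v : Fin n) : ℕ := #{i | f.witness z i = v}

theorem sum_load (z : Fin n → Bool) : ∑ v, f.load z v = f.count z := by
  simp [load, sum_card_fiberwise_eq_card_filter, card_satisfied]

def flipOn (z : Fin n → Bool) (S : Finset (Fin n)) : Fin n → Bool :=
  fun v => z v ^^ decide (v ∈ S)

theorem flipOn_injective (z : Fin n → Bool) : Function.Injective (flipOn z) := by
  intro S S' h
  ext v
  simpa [flipOn] using congrFun h v

theorem count_le_count_flipOn_add_sum_load (z : Fin n → Bool) (S : Finset (Fin n)) :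
    f.count z ≤ f.count (flipOn z S) + ∑ v ∈ S, f.load z v := by
  have hkept : #{i | f.witness z i ∉ S} ≤ f.count (flipOn z S) := by
    refine card_le_card_of_injOn Subtype.val (fun i hi => ?_) Subtype.val_injective.injOn
    refine f.mem_satisfied_of_apply_witness i ?_
    simp [flipOn, (mem_filter.1 hi).2]
  calc f.count z = #{i | f.witness z i ∉ S} + #{i | f.witness z i ∈ S} := by
        rw [add_comm, card_filter_add_card_filter_not, card_univ, Fintype.card_coe, card_satisfied]
    _ ≤ f.count (flipOn z S) + ∑ v ∈ S, f.load z v := by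
        simp only [load, sum_card_fiberwise_eq_card_filter]; gcongr

theorem exists_choose_le_card_near_optimal {ε : ℝ} (hε : 0 < ε) (r : ℕ) :
    ∃ b : ℕ, b * ε ≤ r ∧
      (n - b).choose r ≤ Nat.card {z // (1 - ε) * f.mstar ≤ f.count z} := by
  obtain ⟨z, hz⟩ := f.exists_count_eq_mstar
  rcases r.eq_zero_or_pos with rfl | hr
  · have : Nonempty {z // (1 - ε) * f.mstar ≤ f.count z} :=
      ⟨z, by rw [hz]; exact mul_le_of_le_one_left f.mstar.cast_nonneg (by linarith)⟩
    exact ⟨0, by simp, (Nat.choose_zero_right _).trans_le Nat.card_pos⟩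
  have hd : ∑ v, (f.load z v : ℝ) = f.mstar := by exact_mod_cast (f.sum_load z).trans hz
  set τ := ε / r * f.mstar
  refine ⟨#{v | τ < f.load z v}, ?_, ?_⟩
  · have := card_filter_mul_sum_lt_mul_le_one univ (fun v _ => (f.load z v).cast_nonneg) (ε / r)
    rwa [hd, mul_div_assoc', div_le_one (by positivity)] at this
  have hgood : n - #{v | τ < f.load z v} = #{v | ¬ τ < f.load z v} := by
    have := card_filter_add_card_filter_not (s := univ) (fun v => τ < f.load z v)
    rw [card_univ, Fintype.card_fin] at this
    omega
  rw [Nat.card_eq_fintype_card, Fintype.card_subtype, hgood, ← card_powersetCard]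
  refine card_le_card_of_injOn (flipOn z) (fun S hS => ?_) (flipOn_injective z).injOn
  obtain ⟨hSgood, hSr⟩ := mem_powersetCard.1 hS
  have hloss : ∑ v ∈ S, (f.load z v : ℝ) ≤ ε * f.mstar :=
    calc ∑ v ∈ S, (f.load z v : ℝ) ≤ #S • τ :=
          sum_le_card_nsmul _ _ _ fun v hv => not_lt.1 (mem_filter.1 (hSgood hv)).2
      _ = ε * f.mstar := by
        rw [hSr, nsmul_eq_mul, ← mul_assoc, mul_div_cancel₀ _ (by positivity)]
  have hflip : (f.mstar : ℝ) ≤ f.count (flipOn z S) + ∑ v ∈ S, (f.load z v : ℝ) := by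
    rw [← hz]; exact_mod_cast f.count_le_count_flipOn_add_sum_load z S
  rw [mem_coe, mem_filter]
  exact ⟨mem_univ _, by linarith⟩

end EkSAT

theorem two_pow_sub_one_div_le_one (k : ℕ) : ((2 : ℝ) ^ k - 1) / (2 ^ k * k) ≤ 1 := by
  refine div_le_one_of_le₀ ?_ (by positivity)
  rcases k.eq_zero_or_pos with rfl | hk
  · simp
  · have hk' : (1 : ℝ) ≤ k := Nat.one_le_cast.2 hk
    nlinarith [one_le_pow₀ (one_le_two : (1 : ℝ) ≤ 2) (n := k)]

theorem mul_sub_one_div_le_cast_sub {n b : ℕ} {ε c δ : ℝ} (hε : 0 < ε) (hcε : c ≤ ε)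
    (hδ : 1 ≤ δ) (hb : b * ε ≤ n * c / δ) : n * (δ - 1) / δ ≤ (n - b : ℕ) := by
  have hbδ : (b : ℝ) ≤ n / δ := by
    refine le_of_mul_le_mul_right ?_ hε
    calc (b : ℝ) * ε ≤ n * c / δ := hb
      _ ≤ n / δ * ε := by rw [div_mul_eq_mul_div]; gcongr
  have hbn : b ≤ n := by exact_mod_cast hbδ.trans (div_le_self n.cast_nonneg hδ)
  rw [Nat.cast_sub hbn]
  calc n * (δ - 1) / δ = n - n / δ := by field_simp
    _ ≤ n - b := by linarith

theorem EkSAT.count_near_optimal_lower_bound_general (n k : ℕ) (f : EkSAT n k)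
    (ε : ℝ) (hε0 : 0 < ε)
    (δ : ℝ) (hδ : 1 + ε * ((2 : ℝ) ^ k - 1) / ((2 : ℝ) ^ k * (k : ℝ)) ≤ δ)
    (r : ℕ) (hr : r = ⌊(n : ℝ) * ε * ((2 : ℝ) ^ k - 1) / (δ * (2 : ℝ) ^ k * (k : ℝ))⌋₊) :
    (2 : ℝ) ^ (binH ((r : ℝ) * δ / ((δ - 1) * (n : ℝ))) * ((δ - 1) / δ) * (n : ℝ)) / ((n : ℝ) + 1)
      ≤ (Nat.card {z : Fin n → Bool // (1 - ε) * (f.mstar : ℝ) ≤ (f.count z : ℝ)} : ℝ) := by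
  obtain ⟨b, hbε, hb⟩ := f.exists_choose_le_card_near_optimal hε0 r
  set c := ε * ((2 : ℝ) ^ k - 1) / ((2 : ℝ) ^ k * k) with hc
  have hc0 : 0 ≤ c := div_nonneg (mul_nonneg hε0.le (sub_nonneg.2 (one_le_pow₀ one_le_two)))
    (by positivity)
  have hcε : c ≤ ε := by
    rw [hc, mul_div_assoc]; exact mul_le_of_le_one_right hε0.le (two_pow_sub_one_div_le_one k)
  have hδ0 : 0 < δ := by linarith
  have hrc : (r : ℝ) ≤ n * c / δ := by
    rw [hr, show (n : ℝ) * ε * (2 ^ k - 1) / (δ * 2 ^ k * k) = n * c / δ by rw [hc]; ring]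
    exact Nat.floor_le (by positivity)
  set x := n * (δ - 1) / δ with hx
  have hrx : (r : ℝ) ≤ x := hrc.trans (by rw [hx]; gcongr; linarith)
  have hxb : x ≤ (n - b : ℕ) :=
    mul_sub_one_div_le_cast_sub hε0 hcε (by linarith) (hbε.trans hrc)
  have hexp : binH (r * δ / ((δ - 1) * n)) * ((δ - 1) / δ) * n = x * binH (r / x) := by
    rw [show r * δ / ((δ - 1) * n) = r / x by rw [hx, div_div_eq_mul_div, mul_comm (n : ℝ)],
      mul_assoc, show (δ - 1) / δ * n = x by rw [hx]; ring, mul_comm]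
  calc _ = (2 : ℝ) ^ (x * binH (r / x)) / (n + 1) := by rw [hexp]
    _ ≤ ((n - b : ℕ) + 1) * (n - b).choose r / (n + 1) := by
        gcongr; exact two_rpow_mul_binH_div_le hrx hxb
    _ ≤ (n + 1) * (n - b).choose r / (n + 1) := by gcongr; exact_mod_cast n.sub_le b
    _ = (n - b).choose r := mul_div_cancel_left₀ _ (by positivity)
    _ ≤ _ := by exact_mod_cast hb

theorem EkSAT.count_near_optimal_lower_bound (n k : ℕ) (hn : 1 ≤ n) (hk : 1 ≤ k)
    (f : EkSAT n k) (hm : 1 ≤ f.m)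
    (ε : ℝ) (hε0 : 0 < ε) (hε1 : ε ≤ 1)
    (δ : ℝ) (hδ : 1 + ε * ((2 : ℝ) ^ k - 1) / ((2 : ℝ) ^ k * (k : ℝ)) ≤ δ)
    (r : ℕ) (hr : r = ⌊(n : ℝ) * ε * ((2 : ℝ) ^ k - 1) / (δ * (2 : ℝ) ^ k * (k : ℝ))⌋₊) :
    (2 : ℝ) ^ (binH ((r : ℝ) * δ / ((δ - 1) * (n : ℝ))) * ((δ - 1) / δ) * (n : ℝ)) / ((n : ℝ) + 1)
      ≤ (Nat.card {z : Fin n → Bool // (1 - ε) * (f.mstar : ℝ) ≤ (f.count z : ℝ)} : ℝ) :=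
  EkSAT.count_near_optimal_lower_bound_general n k f ε hε0 δ hδ r hr
end

section
/- Let f be a k-CNF formula on n ≥ 1 variables with m ≥ 1 clauses, where each clause is a disjunction of at least 1 and at most k literals over distinct variables, and let ℓ denote the total number of literal occurrences in f (so m ≤ ℓ ≤ km). Let ε ∈ (0,1] and set r = ⌊ε·m·n/(4ℓ)⌋. Then r ≤ n/2, and the number of assignments z ∈ {0,1}^n with C(f,z) ≥ (1−ε)·m* is at least 2^{H(2r/n)·(n/2)} / (n+1). -/
/-!
Start from an optimal assignment `z`. By Markov's inequality at least `⌈n/2⌉` variables occur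
at most `2ℓ/n` times each, so flipping any `r` of them falsifies at most `2rℓ/n ≤ εm/2 ≤ εm*`
clauses (using `m ≤ 2m*`, as every clause is satisfied by `z` or by its complement). Distinct sets of
flipped variables give distinct assignments, so there are at least `C(⌈n/2⌉, r)` near-optimal
ones. Finally, `r` is a mode of `Bin(⌈n/2⌉, p)` for `p = 2r/n`, so
`C(⌈n/2⌉, r) p^r (1-p)^(⌈n/2⌉-r) ≥ 1/(n+1)`, and `p^r (1-p)^(n/2-r) = 2^(-H(p) n/2)`.
-/

/-- A k-CNF formula on `n` Boolean variables: `m` clauses, each clause `i` being a disjunction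
of `arity i` literals (with `1 ≤ arity i ≤ k`) over distinct variables. The `t`-th literal of
clause `i` is the variable `vars i t` if `sign i t = true`, and its negation otherwise. -/
structure KCNF (n k : ℕ) where
  m : ℕ
  arity : Fin m → ℕ
  arity_pos : ∀ i, 1 ≤ arity i
  arity_le : ∀ i, arity i ≤ k
  vars : (i : Fin m) → Fin (arity i) → Fin n
  vars_inj : ∀ i, Function.Injective (vars i)
  sign : (i : Fin m) → Fin (arity i) → Bool

namespace KCNF

variable {n k : ℕ}

/-- The total number `ℓ` of literal occurrences in `f`. -/
def len (f : KCNF n k) : ℕ := ∑ i, f.arity i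

/-- The number `C(f,z)` of clauses of `f` satisfied by the assignment `z`: clause `i` is
satisfied iff some literal of it evaluates to true. -/
def count (f : KCNF n k) (z : Fin n → Bool) : ℕ :=
  (Finset.univ.filter
    (fun i : Fin f.m => ∃ t : Fin (f.arity i), z (f.vars i t) = f.sign i t)).card

/-- The maximum number `m* = max_z C(f,z)` of simultaneously satisfiable clauses. -/
def mstar (f : KCNF n k) : ℕ :=
  Finset.univ.sup f.count

end KCNF

open Finset Real

noncomputable def binomialTerm (N : ℕ) (p : ℝ) (j : ℕ) : ℝ :=
  N.choose j * p ^ j * (1 - p) ^ (N - j)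

lemma binomialTerm_nonneg {p : ℝ} (hp0 : 0 ≤ p) (hp1 : p ≤ 1) (N j : ℕ) :
    0 ≤ binomialTerm N p j := by
  unfold binomialTerm
  have : 0 ≤ 1 - p := by linarith
  positivity

lemma sum_binomialTerm (N : ℕ) (p : ℝ) : ∑ j ∈ range (N + 1), binomialTerm N p j = 1 := by
  simpa [binomialTerm, mul_comm, mul_assoc, mul_left_comm] using (add_pow p (1 - p) N).symm

lemma binomialTerm_succ_mul (N : ℕ) (p : ℝ) (j : ℕ) :
    binomialTerm N p (j + 1) * ((j + 1) * (1 - p)) =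
      binomialTerm N p j * ((N - j : ℕ) * p) := by
  rcases lt_or_ge j N with hj | hj
  · have hchoose : (N.choose (j + 1) : ℝ) * (j + 1) = N.choose j * (N - j : ℕ) := by
      exact_mod_cast Nat.choose_succ_right_eq N j
    have hpow : (1 - p) ^ (N - j) = (1 - p) ^ (N - (j + 1)) * (1 - p) := by
      rw [← pow_succ]; congr 1; omega
    unfold binomialTerm
    rw [hpow, pow_succ]
    linear_combination p ^ j * p * (1 - p) ^ (N - (j + 1)) * (1 - p) * hchoose
  · simp [binomialTerm, Nat.choose_eq_zero_of_lt (Nat.lt_succ_of_le hj), Nat.sub_eq_zero_of_le hj]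

lemma binomialTerm_succ_le {N : ℕ} {p : ℝ} (hp0 : 0 ≤ p) (hp1 : p < 1) {j : ℕ}
    (h : (N - j : ℕ) * p ≤ (j + 1) * (1 - p)) :
    binomialTerm N p (j + 1) ≤ binomialTerm N p j := by
  have hpos : 0 < ((j : ℝ) + 1) * (1 - p) := by
    have : 0 < 1 - p := by linarith
    positivity
  refine le_of_mul_le_mul_right ?_ hpos
  rw [binomialTerm_succ_mul]
  exact mul_le_mul_of_nonneg_left h (binomialTerm_nonneg hp0 hp1.le N j)

lemma binomialTerm_le_succ {N : ℕ} {p : ℝ} (hp0 : 0 < p) (hp1 : p ≤ 1) {j : ℕ} (hj : j < N)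
    (h : (j + 1) * (1 - p) ≤ (N - j : ℕ) * p) :
    binomialTerm N p j ≤ binomialTerm N p (j + 1) := by
  have hpos : 0 < ((N - j : ℕ) : ℝ) * p := by
    have : 0 < N - j := Nat.sub_pos_of_lt hj
    positivity
  refine le_of_mul_le_mul_right ?_ hpos
  rw [← binomialTerm_succ_mul]
  exact mul_le_mul_of_nonneg_left h (binomialTerm_nonneg hp0.le hp1 N _)

lemma binomialTerm_le_of_mode {N : ℕ} {p : ℝ} (hp0 : 0 < p) (hp1 : p < 1) {j : ℕ}
    (hlo : (N + 1) * p - 1 ≤ j) (hhi : j ≤ (N + 1) * p) (i : ℕ) :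
    binomialTerm N p i ≤ binomialTerm N p j := by
  have hjN : j < N + 1 := by
    have : (j : ℝ) < N + 1 := by nlinarith
    exact_mod_cast this
  rcases le_total j i with hji | hij
  · refine antitoneOn_nat_Ici_of_succ_le (fun n hn => binomialTerm_succ_le hp0.le hp1 ?_)
      (le_refl j) hji hji
    rcases le_total n N with hnN | hnN
    · rw [Nat.cast_sub hnN]
      have : (j : ℝ) ≤ n := by exact_mod_cast hn
      nlinarith
    · rw [Nat.sub_eq_zero_of_le hnN, Nat.cast_zero, zero_mul]
      have : 0 < 1 - p := by linarith
      positivity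
  · refine monotoneOn_of_le_succ Set.ordConnected_Iic (fun n _ _ hn => ?_) hij le_rfl hij
    rw [Set.mem_Iic, Order.succ_eq_add_one] at hn
    rw [Order.succ_eq_add_one]
    refine binomialTerm_le_succ hp0 hp1.le (by omega) ?_
    rw [Nat.cast_sub (by omega)]
    have : (n : ℝ) + 1 ≤ j := by exact_mod_cast hn
    nlinarith

lemma inv_succ_le_binomialTerm_of_mode {N : ℕ} {p : ℝ} (hp0 : 0 < p) (hp1 : p < 1) {j : ℕ}
    (hlo : (N + 1) * p - 1 ≤ j) (hhi : j ≤ (N + 1) * p) :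
    ((N : ℝ) + 1)⁻¹ ≤ binomialTerm N p j := by
  rw [inv_le_iff_one_le_mul₀ (by positivity)]
  calc (1 : ℝ) = ∑ i ∈ range (N + 1), binomialTerm N p i := (sum_binomialTerm N p).symm
    _ ≤ ∑ _i ∈ range (N + 1), binomialTerm N p j :=
      sum_le_sum fun i _ => binomialTerm_le_of_mode hp0 hp1 hlo hhi i
    _ = binomialTerm N p j * ((N : ℝ) + 1) := by simp [mul_comm]

lemma two_rpow_binH_mul {p : ℝ} (hp0 : 0 < p) (hp1 : p < 1) (a : ℝ) :
    (2 : ℝ) ^ (binH p * a) = (p ^ (p * a) * (1 - p) ^ ((1 - p) * a))⁻¹ := by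
  have hq0 : 0 < 1 - p := by linarith
  have hexp : binH p * a = logb 2 p * -(p * a) + logb 2 (1 - p) * -((1 - p) * a) := by
    unfold binH; ring
  rw [hexp, rpow_add two_pos, rpow_mul zero_le_two, rpow_mul zero_le_two,
    rpow_logb two_pos (by norm_num) hp0, rpow_logb two_pos (by norm_num) hq0,
    rpow_neg hp0.le, rpow_neg hq0.le, mul_inv]

lemma two_rpow_binH_div_le_choose {n N r : ℕ} (hnN : n ≤ 2 * N) (hNn : 2 * N ≤ n + 1)
    (hr : 4 * r ≤ n) :
    (2 : ℝ) ^ (binH (2 * r / n) * (n / 2)) / (n + 1) ≤ N.choose r := by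
  rcases Nat.eq_zero_or_pos r with rfl | hr0
  · simpa [binH] using inv_le_one_of_one_le₀ (by linarith [n.cast_nonneg (α := ℝ)])
  set p : ℝ := 2 * r / n with hp
  have hn : (4 * r : ℝ) ≤ n := by exact_mod_cast hr
  have hr0' : (0 : ℝ) < r := by exact_mod_cast hr0
  have hn0 : (0 : ℝ) < n := by linarith
  have hnN' : (n : ℝ) ≤ 2 * N := by exact_mod_cast hnN
  have hNn' : (2 * N : ℝ) ≤ n + 1 := by exact_mod_cast hNn
  have hpn : p * (n / 2) = r := by rw [hp]; field_simp
  have hp0 : 0 < p := by rw [hp]; positivity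
  have hp2 : p ≤ 1 / 2 := by rw [hp, div_le_iff₀ (by linarith)]; linarith
  have hq0 : 0 < 1 - p := by linarith
  set D : ℝ := p ^ (p * (n / 2)) * (1 - p) ^ ((1 - p) * (n / 2)) with hDdef
  have hD : 0 < D := by positivity
  have hmode : binomialTerm N p r ≤ N.choose r * D := by
    rw [binomialTerm, mul_assoc, hDdef, hpn, rpow_natCast]
    gcongr
    rw [← rpow_natCast, Nat.cast_sub (by omega)]
    exact rpow_le_rpow_of_exponent_ge hq0 (by linarith) (by linarith)
  have hinv : ((n : ℝ) + 1)⁻¹ ≤ binomialTerm N p r := by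
    refine le_trans ?_ (inv_succ_le_binomialTerm_of_mode hp0 (by linarith) ?_ ?_)
    · gcongr; linarith
    · nlinarith
    · nlinarith
  calc (2 : ℝ) ^ (binH p * (n / 2)) / (n + 1) = ((n : ℝ) + 1)⁻¹ / D := by
        rw [two_rpow_binH_mul hp0 (by linarith)]; ring
    _ ≤ binomialTerm N p r / D := by gcongr
    _ ≤ N.choose r := by rwa [div_le_iff₀ hD]

def flipOn {α : Type*} [DecidableEq α] (S : Finset α) (z : α → Bool) : α → Bool :=
  fun v => if v ∈ S then !z v else z v

lemma flipOn_left_injective {α : Type*} [DecidableEq α] (z : α → Bool) :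
    Function.Injective fun S : Finset α => flipOn S z := by
  intro S T hST
  ext v
  have := congrFun hST v
  by_cases hS : v ∈ S <;> by_cases hT : v ∈ T <;> simp_all [flipOn]

lemma half_card_le_card_filter_mul_le_two_mul_sum {ι : Type*} [Fintype ι] (w : ι → ℕ) :
    (Fintype.card ι + 1) / 2 ≤ #{i | Fintype.card ι * w i ≤ 2 * ∑ j, w j} := by
  set n := Fintype.card ι
  set ℓ := ∑ j, w j
  set B : Finset ι := {i | ¬ n * w i ≤ 2 * ℓ}
  have hsplit : #{i | n * w i ≤ 2 * ℓ} + #B = n := by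
    rw [card_filter_add_card_filter_not, card_univ]
  have hB : #B * (2 * ℓ + 1) ≤ n * ℓ := by
    calc #B * (2 * ℓ + 1) = ∑ _i ∈ B, (2 * ℓ + 1) := by rw [sum_const, smul_eq_mul]
      _ ≤ ∑ i ∈ B, n * w i := sum_le_sum fun i hi => by
          rw [mem_filter] at hi; omega
      _ = n * ∑ i ∈ B, w i := (mul_sum _ _ _).symm
      _ ≤ n * ℓ := Nat.mul_le_mul_left n (sum_le_sum_of_subset (subset_univ B))
  have : 2 * #B < n ∨ #B = 0 := by
    by_contra! h
    have := Nat.mul_le_mul_right (2 * ℓ + 1) h.1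
    have := Nat.pos_of_ne_zero h.2
    linarith
  omega

namespace KCNF

variable {n k : ℕ}

def occ (f : KCNF n k) (v : Fin n) : ℕ :=
  ∑ i, #{t | f.vars i t = v}

lemma sum_occ (f : KCNF n k) : ∑ v, f.occ v = f.len := by
  unfold occ len
  rw [sum_comm]
  refine sum_congr rfl fun i _ => ?_
  rw [← card_eq_sum_card_fiberwise fun t _ => mem_univ (f.vars i t), card_univ, Fintype.card_fin]

lemma m_le_len (f : KCNF n k) : f.m ≤ f.len := by
  calc f.m = ∑ _i : Fin f.m, 1 := by simp
    _ ≤ f.len := sum_le_sum fun i _ => f.arity_pos i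

lemma count_le_mstar (f : KCNF n k) (z : Fin n → Bool) : f.count z ≤ f.mstar :=
  le_sup (mem_univ z)

lemma exists_count_eq_mstar (f : KCNF n k) : ∃ z, f.count z = f.mstar := by
  obtain ⟨z, -, hz⟩ := exists_mem_eq_sup univ univ_nonempty f.count
  exact ⟨z, hz.symm⟩

/-- Every clause is satisfied by `z` or by its complement, through its first literal. -/
lemma m_le_count_add_count_not (f : KCNF n k) (z : Fin n → Bool) :
    f.m ≤ f.count z + f.count (fun v => !z v) := by
  unfold count
  refine le_trans ?_ (card_union_le _ _)
  refine le_of_eq_of_le (card_fin f.m).symm (card_le_card fun i _ => ?_)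
  have t : Fin (f.arity i) := ⟨0, f.arity_pos i⟩
  rw [mem_union, mem_filter, mem_filter]
  by_cases h : z (f.vars i t) = f.sign i t
  · exact Or.inl ⟨mem_univ i, t, h⟩
  · exact Or.inr ⟨mem_univ i, t, by simpa [Bool.eq_not_iff] using h⟩

lemma m_le_two_mul_mstar (f : KCNF n k) : f.m ≤ 2 * f.mstar := by
  let z : Fin n → Bool := fun _ => true
  have := f.m_le_count_add_count_not z
  have := f.count_le_mstar z
  have := f.count_le_mstar fun v => !z v
  omega

lemma card_filter_exists_mem_le_sum_occ (f : KCNF n k) (S : Finset (Fin n)) :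
    #{i | ∃ t, f.vars i t ∈ S} ≤ ∑ v ∈ S, f.occ v := by
  calc #{i | ∃ t, f.vars i t ∈ S} ≤ ∑ i, #{t | f.vars i t ∈ S} := by
        rw [card_eq_sum_ones]
        refine (sum_le_sum fun i hi => ?_).trans (sum_le_sum_of_subset (subset_univ _))
        obtain ⟨t, ht⟩ := (mem_filter.mp hi).2
        exact card_pos.mpr ⟨t, mem_filter.mpr ⟨mem_univ t, ht⟩⟩
    _ = ∑ i, ∑ v ∈ S, #{t | f.vars i t = v} := sum_congr rfl fun i _ => by
        rw [card_eq_sum_card_fiberwise (s := {t | f.vars i t ∈ S})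
          fun t ht => (mem_filter.mp ht).2]
        refine sum_congr rfl fun v hv => ?_
        rw [filter_filter]
        exact congrArg card (filter_congr fun t _ => and_iff_right_of_imp fun h => h ▸ hv)
    _ = ∑ v ∈ S, f.occ v := sum_comm

/-- Flipping the variables of `S` can only unsatisfy clauses containing one of them. -/
lemma count_le_count_flipOn_add_sum_occ (f : KCNF n k) (z : Fin n → Bool) (S : Finset (Fin n)) :
    f.count z ≤ f.count (flipOn S z) + ∑ v ∈ S, f.occ v := by
  refine le_trans ?_ ((card_union_le _ _).trans (Nat.add_le_add_left
    (f.card_filter_exists_mem_le_sum_occ S) _))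
  refine card_le_card fun i hi => ?_
  obtain ⟨t, ht⟩ := (mem_filter.mp hi).2
  rw [mem_union, mem_filter, mem_filter]
  by_cases hS : ∃ t', f.vars i t' ∈ S
  · exact Or.inr ⟨mem_univ i, hS⟩
  · exact Or.inl ⟨mem_univ i, t, by simpa [flipOn, not_exists.mp hS t] using ht⟩

lemma le_count_flipOn_of_sum_occ_le (f : KCNF n k) {z : Fin n → Bool} (hz : f.count z = f.mstar)
    {S : Finset (Fin n)} {ε : ℝ} (hS : (∑ v ∈ S, f.occ v : ℝ) ≤ ε * f.mstar) :
    (1 - ε) * f.mstar ≤ f.count (flipOn S z) := by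
  have h := f.count_le_count_flipOn_add_sum_occ z S
  rw [hz] at h
  have : (f.mstar : ℝ) ≤ f.count (flipOn S z) + ∑ v ∈ S, (f.occ v : ℝ) := by exact_mod_cast h
  linarith

def lowOcc (f : KCNF n k) : Finset (Fin n) := {v | n * f.occ v ≤ 2 * f.len}

lemma half_succ_le_card_lowOcc (f : KCNF n k) : (n + 1) / 2 ≤ #f.lowOcc := by
  simpa [lowOcc, f.sum_occ] using half_card_le_card_filter_mul_le_two_mul_sum f.occ

lemma mul_sum_occ_le_of_subset_lowOcc (f : KCNF n k) {S : Finset (Fin n)} (hS : S ⊆ f.lowOcc) :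
    n * ∑ v ∈ S, f.occ v ≤ #S * (2 * f.len) := by
  rw [mul_sum, ← smul_eq_mul (#S)]
  exact sum_le_card_nsmul S _ _ fun v hv => (mem_filter.mp (hS hv)).2

lemma four_mul_len_mul_le_of_eq_floor (f : KCNF n k) (hm : 1 ≤ f.m) {ε : ℝ} (hε : 0 ≤ ε)
    {r : ℕ} (hr : r = ⌊ε * f.m * n / (4 * f.len)⌋₊) : 4 * f.len * r ≤ ε * f.m * n := by
  have hℓ : (0 : ℝ) < f.len := by exact_mod_cast hm.trans f.m_le_len
  rw [mul_comm, ← le_div_iff₀ (by positivity), hr]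
  exact Nat.floor_le (by positivity)

lemma four_mul_le_of_eq_floor (f : KCNF n k) (hm : 1 ≤ f.m) {ε : ℝ} (hε0 : 0 ≤ ε)
    (hε1 : ε ≤ 1) {r : ℕ} (hr : r = ⌊ε * f.m * n / (4 * f.len)⌋₊) : 4 * r ≤ n := by
  have hℓ : (0 : ℝ) < f.len := by exact_mod_cast hm.trans f.m_le_len
  have hεm : ε * f.m ≤ f.len := by
    nlinarith [(by exact_mod_cast f.m_le_len : (f.m : ℝ) ≤ f.len)]
  have : (f.len : ℝ) * (4 * r) ≤ f.len * n := by
    nlinarith [f.four_mul_len_mul_le_of_eq_floor hm hε0 hr, mul_le_mul_of_nonneg_right hεm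
      (Nat.cast_nonneg (α := ℝ) n)]
  exact_mod_cast le_of_mul_le_mul_left this hℓ

lemma le_count_flipOn_of_subset_lowOcc (f : KCNF n k) (hn : 1 ≤ n) {z : Fin n → Bool}
    (hz : f.count z = f.mstar) {ε : ℝ} (hε : 0 ≤ ε) {S : Finset (Fin n)}
    (hS : S ⊆ f.lowOcc) (hSℓ : 4 * f.len * #S ≤ ε * f.m * n) :
    (1 - ε) * f.mstar ≤ f.count (flipOn S z) := by
  refine f.le_count_flipOn_of_sum_occ_le hz ?_
  have hn0 : (0 : ℝ) < n := by exact_mod_cast hn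
  have hsum : (n : ℝ) * ∑ v ∈ S, (f.occ v : ℝ) ≤ #S * (2 * f.len) := by
    exact_mod_cast f.mul_sum_occ_le_of_subset_lowOcc hS
  have hm2 : (f.m : ℝ) ≤ 2 * f.mstar := by exact_mod_cast f.m_le_two_mul_mstar
  have := mul_le_mul_of_nonneg_left hm2 (by positivity : 0 ≤ ε * n)
  refine le_of_mul_le_mul_left ?_ hn0
  nlinarith

end KCNF

theorem KCNF.count_near_optimal_lower_bound (n k : ℕ) (hn : 1 ≤ n)
    (f : KCNF n k) (hm : 1 ≤ f.m)
    (ε : ℝ) (hε0 : 0 < ε) (hε1 : ε ≤ 1)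
    (r : ℕ) (hr : r = ⌊ε * (f.m : ℝ) * (n : ℝ) / (4 * (f.len : ℝ))⌋₊) :
    (r : ℝ) ≤ (n : ℝ) / 2 ∧
    (2 : ℝ) ^ (binH (2 * (r : ℝ) / (n : ℝ)) * ((n : ℝ) / 2)) / ((n : ℝ) + 1)
      ≤ (Nat.card {z : Fin n → Bool // (1 - ε) * (f.mstar : ℝ) ≤ (f.count z : ℝ)} : ℝ) := by
  have hr4 : 4 * r ≤ n := f.four_mul_le_of_eq_floor hm hε0.le hε1 hr
  refine ⟨by rw [le_div_iff₀ two_pos]; exact_mod_cast (by omega : r * 2 ≤ n), ?_⟩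
  obtain ⟨z, hz⟩ := f.exists_count_eq_mstar
  have hgood : ∀ S ∈ powersetCard r f.lowOcc, (1 - ε) * f.mstar ≤ f.count (flipOn S z) := by
    intro S hS
    obtain ⟨hSL, rfl⟩ := mem_powersetCard.mp hS
    exact f.le_count_flipOn_of_subset_lowOcc hn hz hε0.le hSL
      (f.four_mul_len_mul_le_of_eq_floor hm hε0.le hr)
  calc _ ≤ (((n + 1) / 2).choose r : ℝ) := two_rpow_binH_div_le_choose (by omega) (by omega) hr4
    _ ≤ (#f.lowOcc).choose r := by
      exact_mod_cast Nat.choose_le_choose r f.half_succ_le_card_lowOcc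
    _ = #(powersetCard r f.lowOcc) := by rw [card_powersetCard]
    _ ≤ Nat.card {z : Fin n → Bool // (1 - ε) * (f.mstar : ℝ) ≤ (f.count z : ℝ)} := by
      rw [Nat.card_eq_fintype_card, Fintype.card_subtype]
      exact_mod_cast card_le_card_of_injOn (fun S => flipOn S z)
        (fun S hS => mem_filter.mpr ⟨mem_univ _, hgood S hS⟩) (flipOn_left_injective z).injOn
end
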